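/- arXiv:2107.10659 — 6 statements merged into one kernel-verified Lean document; each statement's English description precedes it below -/
import Mathlib

section
/- Generalized parallel composition for pure DP: let F = {S₁,…,S_k} be a family of subsets of the record domain with maximum degree z (i.e., every record lies in at most z of the sets S_i), and let M₁,…,M_k each be ε-differentially private mechanisms. Then the mechanism M(x) = (M₁(x ∩ S₁), …, M_k(x ∩ S_k)) satisfies (z·ε)-differential privacy. -/
open Real

/-- Two multisets are neighbors if their symmetric difference has size 1. -/
def Neighbor {I : Type*} [DecidableEq I] (x x' : Multiset I) : Prop :=
  ((x - x') + (x' - x)).card = 1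

/-- Pure ε-differential privacy. -/
def PureDP {I : Type*} [DecidableEq I] {Y : Type*}
    (M : Multiset I → PMF Y) (ε : ℝ) : Prop :=
  ∀ x x', Neighbor x x' → ∀ y : Y, M x y ≤ ENNReal.ofReal (Real.exp ε) * M x' y

lemma neighbor_exists_one {I : Type*} [DecidableEq I] {x x' : Multiset I}
    (h : Neighbor x x') : ∃ r : I, x = x' + {r} ∨ x' = x + {r} := by
  unfold Neighbor at h
  rw [Multiset.card_add] at h
  rcases Nat.add_eq_one_iff.mp h with ⟨h1, h2⟩ | ⟨h1, h2⟩
  · obtain ⟨r, hr⟩ := Multiset.card_eq_one.mp h2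
    refine ⟨r, Or.inr ?_⟩
    have hle : x ≤ x' := tsub_eq_zero_iff_le.mp (Multiset.card_eq_zero.mp h1)
    rw [← hr, add_comm]
    exact (tsub_add_cancel_of_le hle).symm
  · obtain ⟨r, hr⟩ := Multiset.card_eq_one.mp h1
    refine ⟨r, Or.inl ?_⟩
    have hle : x' ≤ x := tsub_eq_zero_iff_le.mp (Multiset.card_eq_zero.mp h2)
    rw [← hr, add_comm]
    exact (tsub_add_cancel_of_le hle).symm

lemma neighbor_add_singleton {I : Type*} [DecidableEq I] (x : Multiset I) (r : I) :
    Neighbor (x + {r}) x := by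
  unfold Neighbor
  rw [add_tsub_cancel_left, tsub_eq_zero_iff_le.mpr (Multiset.le_add_right x {r}),
    add_zero]
  rfl

lemma neighbor_symm {I : Type*} [DecidableEq I] {x x' : Multiset I}
    (h : Neighbor x x') : Neighbor x' x := by
  unfold Neighbor at *; rw [add_comm]; exact h

lemma filter_neighbor_or_eq {I : Type*} [DecidableEq I] {x x' : Multiset I} {r : I}
    (hx : x = x' + {r}) (p : I → Prop) [DecidablePred p] :
    (p r → Neighbor (x.filter p) (x'.filter p)) ∧ (¬ p r → x.filter p = x'.filter p) := by
  subst hx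
  rw [Multiset.filter_add]
  constructor
  · intro hp
    rw [Multiset.filter_singleton, if_pos hp]
    exact neighbor_add_singleton _ r
  · intro hp
    simp [Multiset.filter_singleton, if_neg hp]

theorem generalized_parallel_composition_pureDP
    {I : Type*} [DecidableEq I] {k : ℕ} {Y : Fin k → Type*}
    (S : Fin k → Set I) [∀ i, DecidablePred (· ∈ S i)]
    (z : ℕ) (hz : ∀ r : I, (Finset.univ.filter (fun i => r ∈ S i)).card ≤ z)
    (M : ∀ i, Multiset I → PMF (Y i)) (ε : ℝ) (hε : 0 ≤ ε)
    (hM : ∀ i, PureDP (M i) ε)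
    (x x' : Multiset I) (hxx' : Neighbor x x') (y : ∀ i, Y i) :
    (∏ i, (M i (x.filter (· ∈ S i))) (y i)) ≤
      ENNReal.ofReal (Real.exp (z * ε)) * ∏ i, (M i (x'.filter (· ∈ S i))) (y i) := by
  obtain ⟨r, hcase⟩ := neighbor_exists_one hxx'
  have key : ∀ i : Fin k,
      (r ∈ S i → Neighbor (x.filter (· ∈ S i)) (x'.filter (· ∈ S i))) ∧
      (r ∉ S i → x.filter (· ∈ S i) = x'.filter (· ∈ S i)) := by
    intro i
    rcases hcase with hx | hx
    · exact filter_neighbor_or_eq hx _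
    · obtain ⟨h1, h2⟩ := filter_neighbor_or_eq hx (· ∈ S i)
      exact ⟨fun hp => neighbor_symm (h1 hp), fun hp => (h2 hp).symm⟩
  set f : Fin k → ENNReal := fun i => (M i (x.filter (· ∈ S i))) (y i) with hf
  set g : Fin k → ENNReal := fun i => (M i (x'.filter (· ∈ S i))) (y i) with hg
  set T : Finset (Fin k) := Finset.univ.filter (fun i => r ∈ S i) with hT
  have hsplitf := (Finset.prod_filter_mul_prod_filter_not Finset.univ (fun i => r ∈ S i) f).symm
  have hsplitg := (Finset.prod_filter_mul_prod_filter_not Finset.univ (fun i => r ∈ S i) g).symm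
  have hbound : ∀ i ∈ T, f i ≤ ENNReal.ofReal (Real.exp ε) * g i := by
    intro i hi
    have hr : r ∈ S i := (Finset.mem_filter.mp hi).2
    exact hM i _ _ ((key i).1 hr) (y i)
  have heq : ∀ i ∈ Finset.univ.filter (fun i => ¬ r ∈ S i), f i = g i := by
    intro i hi
    have hr : r ∉ S i := (Finset.mem_filter.mp hi).2
    simp only [hf, hg, (key i).2 hr]
  calc ∏ i, f i
      = (∏ i ∈ T, f i) * ∏ i ∈ Finset.univ.filter (fun i => ¬ r ∈ S i), f i := hsplitf
    _ ≤ (∏ i ∈ T, ENNReal.ofReal (Real.exp ε) * g i) *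
          ∏ i ∈ Finset.univ.filter (fun i => ¬ r ∈ S i), g i := by
        gcongr with i hi
        exacts [hbound i hi, le_of_eq (heq _ ‹_›)]
    _ = (ENNReal.ofReal (Real.exp ε)) ^ T.card *
          ((∏ i ∈ T, g i) * ∏ i ∈ Finset.univ.filter (fun i => ¬ r ∈ S i), g i) := by
        rw [Finset.prod_mul_distrib, Finset.prod_const, mul_assoc]
    _ = (ENNReal.ofReal (Real.exp ε)) ^ T.card * ∏ i, g i := by rw [← hsplitg]
    _ ≤ ENNReal.ofReal (Real.exp (z * ε)) * ∏ i, g i := by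
        gcongr
        rw [← ENNReal.ofReal_pow (le_of_lt (Real.exp_pos ε)), ← Real.exp_nat_mul]
        exact ENNReal.ofReal_le_ofReal (Real.exp_le_exp.mpr
          (mul_le_mul_of_nonneg_right (Nat.cast_le.mpr (hz r)) hε))
end

section
/- Generalized parallel composition for zCDP: let F = {S₁,…,S_k} be a family of subsets of the record domain with maximum degree z, and let M₁,…,M_k each satisfy ρ-zCDP. Then M(x) = (M₁(x ∩ S₁), …, M_k(x ∩ S_k)), with independent component mechanisms, satisfies (z·ρ)-zCDP. -/
open Real

/-- Rényi divergence of order `α` between two (sub)distributions given by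
their mass functions. -/
noncomputable def renyiDiv {Y : Type*} (α : ℝ) (P Q : Y → ENNReal) : ℝ :=
  (α - 1)⁻¹ * Real.log (∑' y, (P y).toReal ^ α * (Q y).toReal ^ (1 - α))

/-- ρ-zero-concentrated differential privacy. -/
def zCDP {I : Type*} [DecidableEq I] {Y : Type*}
    (M : Multiset I → PMF Y) (ρ : ℝ) : Prop :=
  ∀ x x', Neighbor x x' → ∀ α : ℝ, 1 < α → renyiDiv α (M x) (M x') ≤ ρ * α

open scoped ENNReal

/-- Factorization of a tsum of a finite product over a Pi type. -/
lemma tsum_pi_prod : ∀ {k : ℕ} {Y : Fin k → Type*} (f : ∀ i, Y i → ℝ≥0∞),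
    ∑' y : ∀ i, Y i, ∏ i, f i (y i) = ∏ i, ∑' y, f i y := by
  intro k
  induction k with
  | zero =>
      intro Y f
      rw [Finset.univ_eq_empty, Finset.prod_empty]
      rw [tsum_eq_single (fun i => i.elim0 : ∀ i : Fin 0, Y i)
        (fun b hb => absurd (Subsingleton.elim b _) hb)]
      simp
  | succ n ih =>
      intro Y f
      calc ∑' y : ∀ i, Y i, ∏ i, f i (y i)
          = ∑' p : Y 0 × (∀ i : Fin n, Y i.succ), ∏ i, f i ((Fin.consEquiv Y) p i) := by
            rw [← (Fin.consEquiv Y).tsum_eq]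
        _ = ∑' (a : Y 0) (b : ∀ i : Fin n, Y i.succ),
              f 0 a * ∏ i : Fin n, f i.succ (b i) := by
            rw [ENNReal.tsum_prod']
            refine tsum_congr fun a => tsum_congr fun b => ?_
            rw [Fin.prod_univ_succ]
            simp [Fin.consEquiv]
        _ = (∑' a, f 0 a) * ∏ i : Fin n, ∑' y, f i.succ y := by
            simp_rw [ENNReal.tsum_mul_left, ENNReal.tsum_mul_right,
              ih (fun i => f i.succ)]
        _ = ∏ i, ∑' y, f i y := (Fin.prod_univ_succ (fun i => ∑' y, f i y)).symm

/-- A real tsum of a nonnegative function equals the `toReal` of the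
corresponding `ENNReal` tsum (true even in the non-summable case). -/
lemma tsum_nonneg_toReal {ι : Type*} (h : ι → ℝ) (h0 : ∀ i, 0 ≤ h i) :
    ∑' i, h i = (∑' i, ENNReal.ofReal (h i)).toReal := by
  by_cases hs : Summable h
  · rw [← ENNReal.ofReal_tsum_of_nonneg h0 hs, ENNReal.toReal_ofReal (tsum_nonneg h0)]
  · rw [tsum_eq_zero_of_not_summable hs]
    by_cases ht : ∑' i, ENNReal.ofReal (h i) = ∞
    · rw [ht]; simp
    · exfalso
      apply hs
      have := ENNReal.summable_toReal ht
      refine this.congr fun i => ?_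
      rw [ENNReal.toReal_ofReal (h0 i)]

theorem generalized_parallel_composition_zCDP
    {I : Type*} [DecidableEq I] {k : ℕ} {Y : Fin k → Type*}
    (S : Fin k → Set I) [∀ i, DecidablePred (· ∈ S i)]
    (z : ℕ) (hz : ∀ r : I, (Finset.univ.filter (fun i => r ∈ S i)).card ≤ z)
    (M : ∀ i, Multiset I → PMF (Y i)) (ρ : ℝ) (hρ : 0 ≤ ρ)
    (hM : ∀ i, zCDP (M i) ρ)
    (x x' : Multiset I) (hxx' : Neighbor x x') (α : ℝ) (hα : 1 < α) :
    renyiDiv α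
        (fun y : ∀ i, Y i => ∏ i, (M i (x.filter (· ∈ S i))) (y i))
        (fun y : ∀ i, Y i => ∏ i, (M i (x'.filter (· ∈ S i))) (y i)) ≤
      (z * ρ) * α := by
  -- notation
  set P : ∀ i, Y i → ℝ≥0∞ := fun i => ⇑(M i (x.filter (· ∈ S i))) with hP
  set Q : ∀ i, Y i → ℝ≥0∞ := fun i => ⇑(M i (x'.filter (· ∈ S i))) with hQ
  set g : ∀ i, Y i → ℝ := fun i y => (P i y).toReal ^ α * (Q i y).toReal ^ (1 - α) with hg
  have hg0 : ∀ i y, 0 ≤ g i y := fun i y =>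
    mul_nonneg (Real.rpow_nonneg ENNReal.toReal_nonneg _)
      (Real.rpow_nonneg ENNReal.toReal_nonneg _)
  -- the record r in the symmetric difference
  obtain ⟨r, hr⟩ := Multiset.card_eq_one.mp hxx'
  -- neighbor / equality of filtered databases
  have hfilter : ∀ i : Fin k,
      (x.filter (· ∈ S i) - x'.filter (· ∈ S i)) + (x'.filter (· ∈ S i) - x.filter (· ∈ S i))
        = ((x - x') + (x' - x)).filter (· ∈ S i) := by
    intro i
    rw [Multiset.filter_add, Multiset.filter_sub, Multiset.filter_sub]
  have hnbr : ∀ i : Fin k, r ∈ S i →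
      Neighbor (x.filter (· ∈ S i)) (x'.filter (· ∈ S i)) := by
    intro i hri
    unfold Neighbor
    rw [hfilter i, hr]
    simp [Multiset.filter_singleton, hri]
  have heq : ∀ i : Fin k, r ∉ S i →
      x.filter (· ∈ S i) = x'.filter (· ∈ S i) := by
    intro i hri
    have h0 : (x.filter (· ∈ S i) - x'.filter (· ∈ S i))
        + (x'.filter (· ∈ S i) - x.filter (· ∈ S i)) = 0 := by
      rw [hfilter i, hr]
      simp [Multiset.filter_singleton, hri]
    rw [add_eq_zero] at h0
    exact le_antisymm (tsub_eq_zero_iff_le.mp h0.1)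
      (tsub_eq_zero_iff_le.mp h0.2)
  -- the total sum factorizes
  have hpoint : ∀ y : ∀ i, Y i,
      ((∏ i, P i (y i)).toReal) ^ α * ((∏ i, Q i (y i)).toReal) ^ (1 - α)
        = ∏ i, g i (y i) := by
    intro y
    rw [ENNReal.toReal_prod, ENNReal.toReal_prod,
      ← Real.finset_prod_rpow _ _ (fun i _ => ENNReal.toReal_nonneg) α,
      ← Real.finset_prod_rpow _ _ (fun i _ => ENNReal.toReal_nonneg) (1 - α),
      ← Finset.prod_mul_distrib]
  set A : Fin k → ℝ≥0∞ := fun i => ∑' y, ENNReal.ofReal (g i y) with hA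
  set t : Fin k → ℝ := fun i => (A i).toReal with ht
  have ht0 : ∀ i, 0 ≤ t i := fun i => ENNReal.toReal_nonneg
  have hti : ∀ i, ∑' y, g i y = t i := fun i => tsum_nonneg_toReal _ (hg0 i)
  have hT : (∑' y : ∀ i, Y i,
      ((∏ i, P i (y i)).toReal) ^ α * ((∏ i, Q i (y i)).toReal) ^ (1 - α)) = ∏ i, t i := by
    rw [tsum_congr hpoint, tsum_nonneg_toReal _
      (fun y => Finset.prod_nonneg fun i _ => hg0 i (y i))]
    have : ∀ y : ∀ i, Y i, ENNReal.ofReal (∏ i, g i (y i))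
        = ∏ i, ENNReal.ofReal (g i (y i)) :=
      fun y => ENNReal.ofReal_prod_of_nonneg fun i _ => hg0 i (y i)
    rw [tsum_congr this, tsum_pi_prod (fun i y => ENNReal.ofReal (g i y)), ENNReal.toReal_prod]
  -- per-coordinate bounds
  have hα1 : (0:ℝ) < α - 1 := by linarith
  have hc0 : 0 ≤ ρ * α * (α - 1) := by positivity
  have hbound : ∀ i : Fin k, Real.log (t i) ≤ if r ∈ S i then ρ * α * (α - 1) else 0 := by
    intro i
    by_cases hri : r ∈ S i
    · simp only [hri, if_true]
      have := hM i _ _ (hnbr i hri) α hα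
      unfold renyiDiv at this
      rw [hti i] at this
      calc Real.log (t i) = (α - 1) * ((α - 1)⁻¹ * Real.log (t i)) := by
            field_simp
        _ ≤ (α - 1) * (ρ * α) := by
            exact mul_le_mul_of_nonneg_left this hα1.le
        _ = ρ * α * (α - 1) := by ring
    · simp only [hri, if_false]
      -- P i = Q i, so the sum is at most 1
      have hPQ : P i = Q i := congrArg (fun s => ⇑(M i s)) (heq i hri)
      have hle : ∀ y, g i y ≤ (P i y).toReal := by
        intro y
        have hgy : g i y = (P i y).toReal ^ α * (P i y).toReal ^ (1 - α) := by
          simp only [hg, ← hPQ]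
        rw [hgy]
        rcases eq_or_lt_of_le (ENNReal.toReal_nonneg : 0 ≤ (P i y).toReal) with h | h
        · rw [← h, Real.zero_rpow (by positivity : α ≠ 0), zero_mul]
        · rw [← Real.rpow_add h]
          norm_num
      have hsumP : Summable fun y => (P i y).toReal :=
        ENNReal.summable_toReal (PMF.tsum_coe_ne_top _)
      have hsum1 : ∑' y, (P i y).toReal = 1 := by
        rw [← ENNReal.tsum_toReal_eq (fun y => PMF.apply_ne_top _ _),
          PMF.tsum_coe, ENNReal.toReal_one]
      have : t i ≤ 1 := by
        rw [← hti i, ← hsum1]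
        exact Summable.tsum_le_tsum hle (Summable.of_nonneg_of_le (hg0 i) hle hsumP) hsumP
      exact Real.log_nonpos (ht0 i) this
  -- sum the bounds
  have hz0 : (0:ℝ) ≤ (z:ℝ) := Nat.cast_nonneg z
  have hlogprod : Real.log (∏ i, t i) ≤ (z : ℝ) * (ρ * α * (α - 1)) := by
    by_cases hzero : ∃ i, t i = 0
    · obtain ⟨i, hi⟩ := hzero
      rw [Finset.prod_eq_zero (Finset.mem_univ i) hi, Real.log_zero]
      positivity
    · push_neg at hzero
      rw [Real.log_prod (fun i _ => hzero i)]
      calc ∑ i, Real.log (t i)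
          ≤ ∑ i, (if r ∈ S i then ρ * α * (α - 1) else 0) :=
            Finset.sum_le_sum fun i _ => hbound i
        _ = ∑ i ∈ Finset.univ.filter (fun i => r ∈ S i), (ρ * α * (α - 1)) := by
            rw [Finset.sum_filter]
        _ = ((Finset.univ.filter (fun i => r ∈ S i)).card : ℝ) * (ρ * α * (α - 1)) := by
            rw [Finset.sum_const, nsmul_eq_mul]
        _ ≤ (z : ℝ) * (ρ * α * (α - 1)) := by
            apply mul_le_mul_of_nonneg_right _ hc0
            exact_mod_cast hz r
  -- conclude
  unfold renyiDiv
  rw [hT]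
  calc (α - 1)⁻¹ * Real.log (∏ i, t i)
      ≤ (α - 1)⁻¹ * ((z : ℝ) * (ρ * α * (α - 1))) :=
        mul_le_mul_of_nonneg_left hlogprod (inv_nonneg.mpr hα1.le)
    _ = (z * ρ) * α := by field_simp
end

section
/- Any ε-differentially private mechanism satisfies (ε²/2)-zCDP. -/
open Real

/- ### Auxiliary lemmas -/

lemma aux_tanh_le_self {t : ℝ} (ht : 0 ≤ t) : Real.tanh t ≤ t := by
  rw [Real.tanh_eq_sinh_div_cosh, div_le_iff₀ (Real.cosh_pos t)]
  have hd : ∀ s : ℝ, HasDerivAt (fun u : ℝ => u * Real.cosh u - Real.sinh u)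
      (s * Real.sinh s) s := by
    intro s
    have h1 : HasDerivAt (fun u : ℝ => u * Real.cosh u)
        (1 * Real.cosh s + s * Real.sinh s) s :=
      (hasDerivAt_id s).mul (Real.hasDerivAt_cosh s)
    have h2 := h1.sub (Real.hasDerivAt_sinh s)
    rw [show 1 * Real.cosh s + s * Real.sinh s - Real.cosh s = s * Real.sinh s by ring] at h2
    exact h2
  have mono : MonotoneOn (fun u : ℝ => u * Real.cosh u - Real.sinh u) (Set.Ici 0) := by
    apply monotoneOn_of_deriv_nonneg (convex_Ici 0)
    · exact (Differentiable.continuous fun s => (hd s).differentiableAt).continuousOn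
    · exact fun s _ => (hd s).differentiableAt.differentiableWithinAt
    · intro s hs
      rw [interior_Ici] at hs
      rw [(hd s).deriv]
      exact mul_nonneg (le_of_lt hs) (Real.sinh_nonneg_iff.2 (le_of_lt hs))
  have h := mono Set.self_mem_Ici (Set.mem_Ici.2 ht) ht
  simp only [Real.cosh_zero, Real.sinh_zero, zero_mul, sub_zero, zero_sub, neg_zero,
    mul_zero] at h
  linarith

lemma aux_cosh_le {a b : ℝ} (ha : 0 ≤ a) (hab : a ≤ b) :
    Real.cosh b ≤ Real.cosh a * Real.exp ((b ^ 2 - a ^ 2) / 2) := by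
  have hd : ∀ t : ℝ, HasDerivAt (fun s : ℝ => Real.log (Real.cosh s) - s ^ 2 / 2)
      (Real.tanh t - t) t := by
    intro t
    have h1 : HasDerivAt (fun s : ℝ => Real.log (Real.cosh s))
        (Real.sinh t / Real.cosh t) t :=
      (Real.hasDerivAt_cosh t).log (Real.cosh_pos t).ne'
    have h2 : HasDerivAt (fun s : ℝ => s ^ 2 / 2) t t := by
      simpa using (hasDerivAt_pow 2 t).div_const 2
    rw [Real.tanh_eq_sinh_div_cosh]; exact h1.sub h2
  have anti : AntitoneOn (fun s : ℝ => Real.log (Real.cosh s) - s ^ 2 / 2) (Set.Ici 0) := by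
    apply antitoneOn_of_deriv_nonpos (convex_Ici 0)
    · exact (Differentiable.continuous fun s => (hd s).differentiableAt).continuousOn
    · exact fun s _ => (hd s).differentiableAt.differentiableWithinAt
    · intro s hs
      rw [interior_Ici] at hs
      rw [(hd s).deriv]
      have := aux_tanh_le_self (le_of_lt hs)
      linarith
  have h := anti (Set.mem_Ici.2 ha) (Set.mem_Ici.2 (ha.trans hab)) hab
  simp only at h
  have hb : Real.log (Real.cosh b) ≤ Real.log (Real.cosh a) + (b ^ 2 - a ^ 2) / 2 := by
    linarith
  calc Real.cosh b = Real.exp (Real.log (Real.cosh b)) :=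
        (Real.exp_log (Real.cosh_pos b)).symm
    _ ≤ Real.exp (Real.log (Real.cosh a) + (b ^ 2 - a ^ 2) / 2) := Real.exp_le_exp.2 hb
    _ = Real.cosh a * Real.exp ((b ^ 2 - a ^ 2) / 2) := by
        rw [Real.exp_add, Real.exp_log (Real.cosh_pos a)]

lemma aux_chord {m M r α : ℝ} (hm : 0 < m) (hmM : m < M) (hmr : m ≤ r) (hrM : r ≤ M)
    (hα : 1 ≤ α) :
    r ^ α ≤ ((M - r) * m ^ α + (r - m) * M ^ α) / (M - m) := by
  have hMm : (0:ℝ) < M - m := sub_pos.2 hmM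
  have ha : 0 ≤ (M - r) / (M - m) := div_nonneg (by linarith) hMm.le
  have hb : 0 ≤ (r - m) / (M - m) := div_nonneg (by linarith) hMm.le
  have hab : (M - r) / (M - m) + (r - m) / (M - m) = 1 := by
    field_simp
    ring
  have h := (convexOn_rpow hα).2 (Set.mem_Ici.2 hm.le)
    (Set.mem_Ici.2 (hm.le.trans (hmr.trans hrM))) ha hb hab
  simp only [smul_eq_mul] at h
  have hr : (M - r) / (M - m) * m + (r - m) / (M - m) * M = r := by
    field_simp
    ring
  rw [hr] at h
  calc r ^ α ≤ (M - r) / (M - m) * m ^ α + (r - m) / (M - m) * M ^ α := h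
    _ = ((M - r) * m ^ α + (r - m) * M ^ α) / (M - m) := by ring

lemma aux_core {u v : ℝ} (hv0 : 0 < v) (huv : v ≤ u) :
    (Real.sinh (u + v) - Real.sinh (u - v)) / Real.sinh (v + v)
      ≤ Real.exp ((u ^ 2 - v ^ 2) / 2) := by
  have hsv : 0 < Real.sinh v := Real.sinh_pos_iff.2 hv0
  have hcv : 0 < Real.cosh v := Real.cosh_pos v
  have h1 : Real.sinh (u + v) - Real.sinh (u - v) = 2 * Real.cosh u * Real.sinh v := by
    rw [Real.sinh_add, Real.sinh_sub]; ring
  have h2 : Real.sinh (v + v) = 2 * Real.sinh v * Real.cosh v := by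
    rw [Real.sinh_add]; ring
  rw [h1, h2]
  have h3 : 2 * Real.cosh u * Real.sinh v / (2 * Real.sinh v * Real.cosh v)
      = Real.cosh u / Real.cosh v := by
    field_simp
  rw [h3, div_le_iff₀ hcv]
  have h4 := aux_cosh_le hv0.le huv
  linarith

lemma aux_scalar {ε α : ℝ} (hε : 0 < ε) (hα : 1 < α) :
    (Real.exp (ε * α) - Real.exp (-(ε * α)) + Real.exp (ε - ε * α) - Real.exp (ε * α - ε))
      / (Real.exp ε - Real.exp (-ε)) ≤ Real.exp (ε ^ 2 * α * (α - 1) / 2) := by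
  have key := aux_core (u := ε * α - ε / 2) (v := ε / 2) (by positivity)
    (by nlinarith)
  rw [show ε * α - ε / 2 + ε / 2 = ε * α from by ring,
    show ε * α - ε / 2 - ε / 2 = ε * α - ε from by ring,
    show ε / 2 + ε / 2 = ε from by ring,
    show ((ε * α - ε / 2) ^ 2 - (ε / 2) ^ 2) / 2 = ε ^ 2 * α * (α - 1) / 2 from by ring]
    at key
  have hnum : Real.exp (ε * α) - Real.exp (-(ε * α)) + Real.exp (ε - ε * α)
      - Real.exp (ε * α - ε) = 2 * (Real.sinh (ε * α) - Real.sinh (ε * α - ε)) := by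
    rw [Real.sinh_eq, Real.sinh_eq, show -(ε * α - ε) = ε - ε * α from by ring]
    ring
  have hden : Real.exp ε - Real.exp (-ε) = 2 * Real.sinh ε := by
    rw [Real.sinh_eq]; ring
  rw [hnum, hden, mul_div_mul_left _ _ (two_ne_zero)]
  exact key

/-- Any ε-differentially private mechanism satisfies (ε²/2)-zCDP. -/
theorem pureDP_implies_zCDP
    {I : Type*} [DecidableEq I] {Y : Type*}
    (M : Multiset I → PMF Y) (ε : ℝ) (hε : 0 ≤ ε) (hM : PureDP M ε) :
    zCDP M (ε ^ 2 / 2) := by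
  intro x x' hN α hα
  have hα0 : (0:ℝ) < α := by linarith
  have hα1 : (0:ℝ) < α - 1 := by linarith
  have hN' : Neighbor x' x := by
    unfold Neighbor at hN ⊢
    rwa [add_comm]
  set P : Y → ℝ := fun y => ((M x) y).toReal with hPdef
  set Q : Y → ℝ := fun y => ((M x') y).toReal with hQdef
  have hPnn : ∀ y, 0 ≤ P y := fun y => ENNReal.toReal_nonneg
  have hQnn : ∀ y, 0 ≤ Q y := fun y => ENNReal.toReal_nonneg
  have hdp : ∀ (a b : Multiset I), Neighbor a b → ∀ y,
      ((M a) y).toReal ≤ Real.exp ε * ((M b) y).toReal := by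
    intro a b hab y
    have h := hM a b hab y
    have hne : ENNReal.ofReal (Real.exp ε) * (M b) y ≠ ⊤ :=
      ENNReal.mul_ne_top ENNReal.ofReal_ne_top (PMF.apply_ne_top _ y)
    calc ((M a) y).toReal ≤ (ENNReal.ofReal (Real.exp ε) * (M b) y).toReal :=
          ENNReal.toReal_mono hne h
      _ = Real.exp ε * ((M b) y).toReal := by
          rw [ENNReal.toReal_mul, ENNReal.toReal_ofReal (Real.exp_pos ε).le]
  have hPQ : ∀ y, P y ≤ Real.exp ε * Q y := hdp x x' hN
  have hQP : ∀ y, Q y ≤ Real.exp ε * P y := hdp x' x hN'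
  have hPsum : Summable P := ENNReal.summable_toReal (M x).tsum_coe_ne_top
  have hQsum : Summable Q := ENNReal.summable_toReal (M x').tsum_coe_ne_top
  have hPone : ∑' y, P y = 1 := by
    rw [hPdef, ← ENNReal.tsum_toReal_eq (fun y => PMF.apply_ne_top _ y), (M x).tsum_coe,
      ENNReal.toReal_one]
  have hQone : ∑' y, Q y = 1 := by
    rw [hQdef, ← ENNReal.tsum_toReal_eq (fun y => PMF.apply_ne_top _ y), (M x').tsum_coe,
      ENNReal.toReal_one]
  -- the function whose sum we bound
  set f : Y → ℝ := fun y => P y ^ α * Q y ^ (1 - α) with hfdef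
  have hfnn : ∀ y, 0 ≤ f y := fun y =>
    mul_nonneg (Real.rpow_nonneg (hPnn y) α) (Real.rpow_nonneg (hQnn y) (1 - α))
  have hren : renyiDiv α (M x) (M x') = (α - 1)⁻¹ * Real.log (∑' y, f y) := rfl
  rcases hε.eq_or_lt with hε0 | hε0
  · -- ε = 0 : the two distributions coincide
    subst hε0
    have heq : ∀ y, P y = Q y := by
      intro y
      have h1 := hPQ y
      have h2 := hQP y
      simp only [Real.exp_zero, one_mul] at h1 h2
      linarith
    have hfP : ∀ y, f y = P y := by
      intro y
      rw [hfdef]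
      simp only
      rw [← heq y]
      rcases (hPnn y).eq_or_lt with h0 | h0
      · rw [← h0]
        simp [Real.zero_rpow (show α ≠ 0 by linarith)]
      · rw [← Real.rpow_add h0, show α + (1 - α) = 1 by ring, Real.rpow_one]
    rw [hren, tsum_congr hfP, hPone, Real.log_one, mul_zero]
    positivity
  · -- ε > 0 : main case
    set m : ℝ := Real.exp (-ε) with hmdef
    set Mc : ℝ := Real.exp ε with hMcdef
    have hm0 : 0 < m := Real.exp_pos _
    have hmMc : m < Mc := Real.exp_lt_exp.2 (by linarith)
    have hMm : (0:ℝ) < Mc - m := sub_pos.2 hmMc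
    set B : ℝ := (Mc ^ α - m ^ α) / (Mc - m) with hBdef
    set A : ℝ := (m ^ α * Mc - Mc ^ α * m) / (Mc - m) with hAdef
    have hpoint : ∀ y, f y ≤ B * P y + A * Q y := by
      intro y
      rcases (hQnn y).eq_or_lt with hQ0 | hQ0
      · have hP0 : P y = 0 := le_antisymm (by
          calc P y ≤ Real.exp ε * Q y := hPQ y
            _ = 0 := by rw [← hQ0, mul_zero]) (hPnn y)
        rw [hfdef]
        simp only
        rw [hP0, ← hQ0, Real.zero_rpow (by linarith : α ≠ 0)]
        simp
      · have hP0 : 0 < P y := by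
          rcases (hPnn y).eq_or_lt with h0 | h0
          · exfalso
            have := hQP y
            rw [← h0, mul_zero] at this
            linarith
          · exact h0
        set r : ℝ := P y / Q y with hrdef
        have hrQ : r * Q y = P y := div_mul_cancel₀ _ hQ0.ne'
        have hmr : m ≤ r := by
          rw [hrdef, le_div_iff₀ hQ0]
          have h := hQP y
          have hh : m * (Real.exp ε * P y) = P y := by
            rw [hmdef, ← mul_assoc, ← Real.exp_add]
            simp
          nlinarith [mul_le_mul_of_nonneg_left h hm0.le]
        have hrM : r ≤ Mc := by
          rw [hrdef, div_le_iff₀ hQ0]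
          exact hPQ y
        have hchord := aux_chord hm0 hmMc hmr hrM hα.le
        have hfy : f y = Q y * r ^ α := by
          rw [hfdef]
          simp only
          rw [← hrQ, Real.mul_rpow (by positivity) (hQnn y), mul_assoc,
            ← Real.rpow_add hQ0, show α + (1 - α) = 1 by ring, Real.rpow_one, mul_comm]
        rw [hfy]
        have h2 : Q y * r ^ α ≤ Q y * (((Mc - r) * m ^ α + (r - m) * Mc ^ α) / (Mc - m)) :=
          mul_le_mul_of_nonneg_left hchord (hQnn y)
        have h3 : Q y * (((Mc - r) * m ^ α + (r - m) * Mc ^ α) / (Mc - m))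
            = B * P y + A * Q y := by
          rw [hBdef, hAdef, ← hrQ]
          field_simp
          ring
        linarith
    have hgsum : Summable (fun y => B * P y + A * Q y) :=
      (hPsum.mul_left B).add (hQsum.mul_left A)
    have hdom : Summable (fun y => B * P y + |A| * Q y) :=
      (hPsum.mul_left B).add (hQsum.mul_left |A|)
    have hfsum : Summable f := by
      apply Summable.of_nonneg_of_le hfnn (fun y => ?_) hdom
      calc f y ≤ B * P y + A * Q y := hpoint y
        _ ≤ B * P y + |A| * Q y := by
            have := mul_le_mul_of_nonneg_right (le_abs_self A) (hQnn y)
            linarith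
    have hsum_le : ∑' y, f y ≤ B + A := by
      calc ∑' y, f y ≤ ∑' y, (B * P y + A * Q y) := Summable.tsum_le_tsum hpoint hfsum hgsum
        _ = B * ∑' y, P y + A * ∑' y, Q y := by
            rw [Summable.tsum_add (hPsum.mul_left B) (hQsum.mul_left A), tsum_mul_left, tsum_mul_left]
        _ = B + A := by rw [hPone, hQone, mul_one, mul_one]
    have hBA : B + A ≤ Real.exp (ε ^ 2 * α * (α - 1) / 2) := by
      have hMα : Mc ^ α = Real.exp (ε * α) := by rw [hMcdef, ← Real.exp_mul]
      have hmα : m ^ α = Real.exp (-(ε * α)) := by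
        rw [hmdef, ← Real.exp_mul]; ring_nf
      have hAm : m ^ α * Mc = Real.exp (ε - ε * α) := by
        rw [hmα, hMcdef, ← Real.exp_add]; ring_nf
      have hAM : Mc ^ α * m = Real.exp (ε * α - ε) := by
        rw [hMα, hmdef, ← Real.exp_add]; ring_nf
      have h := aux_scalar hε0 hα
      rw [hBdef, hAdef, ← add_div, hAm, hAM, hMα, hmα, hMcdef, hmdef,
        show Real.exp (ε * α) - Real.exp (-(ε * α)) + (Real.exp (ε - ε * α)
          - Real.exp (ε * α - ε)) = Real.exp (ε * α) - Real.exp (-(ε * α))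
          + Real.exp (ε - ε * α) - Real.exp (ε * α - ε) from by ring]
      exact h
    have hfin : ∑' y, f y ≤ Real.exp (ε ^ 2 * α * (α - 1) / 2) := hsum_le.trans hBA
    rw [hren]
    have hSnn : 0 ≤ ∑' y, f y := tsum_nonneg hfnn
    rcases hSnn.eq_or_lt with hS0 | hS0
    · rw [← hS0, Real.log_zero, mul_zero]
      positivity
    · have hlog : Real.log (∑' y, f y) ≤ ε ^ 2 * α * (α - 1) / 2 :=
        (Real.log_le_iff_le_exp hS0).2 hfin
      calc (α - 1)⁻¹ * Real.log (∑' y, f y) ≤ (α - 1)⁻¹ * (ε ^ 2 * α * (α - 1) / 2) :=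
            mul_le_mul_of_nonneg_left hlog (by positivity)
        _ = ε ^ 2 / 2 * α := by field_simp
end

section
/- Tail bound for the two-sided geometric distribution: for b > 0 and Y ~ L_Z(b), for all real y, Pr[Y ≥ y] = Pr[Y ≤ -y] ≤ e^{-⌈y⌉/b}/(1 + e^{-1/b}). -/
open Real

/-- Density of the two-sided geometric (discrete Laplace) distribution
with scale `b`, centered at 0. -/
noncomputable def geomPDF (b : ℝ) (x : ℤ) : ℝ :=
  ((Real.exp (1 / b) - 1) / (Real.exp (1 / b) + 1)) * Real.exp (-(|x| : ℝ) / b)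

lemma geomPDF_neg (b : ℝ) (k : ℤ) : geomPDF b (-k) = geomPDF b k := by
  simp [geomPDF]

lemma exp_neg_inv_lt_one (b : ℝ) (hb : 0 < b) : Real.exp (-1 / b) < 1 := by
  rw [Real.exp_lt_one_iff]
  exact div_neg_of_neg_of_pos (by norm_num) hb

/-- Upper tail has sum. -/
lemma upper_tail (b : ℝ) (hb : 0 < b) (n : ℤ) (hn : 0 ≤ n) :
    HasSum (fun k : ℤ => if n ≤ k then geomPDF b k else 0)
      (((Real.exp (1 / b) - 1) / (Real.exp (1 / b) + 1)) * Real.exp (-(n : ℝ) / b) *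
        (1 - Real.exp (-1 / b))⁻¹) := by
  have hinj : Function.Injective (fun j : ℕ => n + (j : ℤ)) := by
    intro a c h; simpa using h
  have hsupp : ∀ k : ℤ, k ∉ Set.range (fun j : ℕ => n + (j : ℤ)) →
      (if n ≤ k then geomPDF b k else 0) = 0 := by
    intro k hk
    rw [if_neg]
    intro h
    exact hk ⟨(k - n).toNat, by simp; omega⟩
  rw [← hinj.hasSum_iff hsupp]
  have hr0 : (0 : ℝ) < Real.exp (-1 / b) := Real.exp_pos _
  have hr1 : Real.exp (-1 / b) < 1 := exp_neg_inv_lt_one b hb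
  have hfun : ((fun k : ℤ => if n ≤ k then geomPDF b k else 0) ∘ (fun j : ℕ => n + (j : ℤ)))
      = fun j : ℕ => (((Real.exp (1 / b) - 1) / (Real.exp (1 / b) + 1)) *
          Real.exp (-(n : ℝ) / b)) * Real.exp (-1 / b) ^ j := by
    funext j
    simp only [Function.comp]
    rw [if_pos (by omega : n ≤ n + (j : ℤ))]
    unfold geomPDF
    rw [abs_of_nonneg (show (0:ℝ) ≤ ((n + (j:ℤ) : ℤ) : ℝ) by exact_mod_cast (by omega : (0:ℤ) ≤ n + (j:ℤ)))]
    rw [← Real.exp_nat_mul, mul_assoc, ← Real.exp_add]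
    congr 2
    push_cast
    ring
  rw [hfun]
  exact (hasSum_geometric_of_lt_one hr0.le hr1).mul_left _

/-- Lower tail has sum, by symmetry. -/
lemma lower_tail (b : ℝ) (hb : 0 < b) (m : ℤ) (hm : m ≤ 0) :
    HasSum (fun k : ℤ => if k ≤ m then geomPDF b k else 0)
      (((Real.exp (1 / b) - 1) / (Real.exp (1 / b) + 1)) * Real.exp ((m : ℝ) / b) *
        (1 - Real.exp (-1 / b))⁻¹) := by
  have h2 := upper_tail b hb (-m) (by omega)
  have heq : (fun k : ℤ => if -m ≤ k then geomPDF b k else 0)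
      = ((fun k : ℤ => if k ≤ m then geomPDF b k else 0) ∘ ⇑(Equiv.neg ℤ)) := by
    funext k
    simp only [Function.comp, Equiv.neg_apply, geomPDF_neg]
    congr 1
    simp only [eq_iff_iff]
    omega
  rw [heq] at h2
  have h3 := (Equiv.neg ℤ).hasSum_iff.mp h2
  convert h3 using 3
  push_cast
  ring

lemma aux_const (E : ℝ) (hE : 1 < E) :
    (E - 1) / (E + 1) * (1 - E⁻¹)⁻¹ = (1 + E⁻¹)⁻¹ := by
  have h0 : E ≠ 0 := by linarith
  have h1 : E - 1 ≠ 0 := by intro h; rw [sub_eq_zero] at h; linarith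
  have h2 : E + 1 ≠ 0 := by linarith
  have h3 : 1 - E⁻¹ = (E - 1) / E := by field_simp
  have h4 : 1 + E⁻¹ = (E + 1) / E := by field_simp
  rw [h3, h4]
  field_simp

lemma key_const (b : ℝ) (hb : 0 < b) :
    ((Real.exp (1 / b) - 1) / (Real.exp (1 / b) + 1)) * (1 - Real.exp (-1 / b))⁻¹
      = (1 + Real.exp (-1 / b))⁻¹ := by
  have hE : 1 < Real.exp (1 / b) := by
    rw [← Real.exp_zero]
    exact Real.exp_lt_exp.mpr (by positivity)
  have hr : Real.exp (-1 / b) = (Real.exp (1 / b))⁻¹ := by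
    rw [← Real.exp_neg]; congr 1; ring
  rw [hr]
  exact aux_const _ hE

/-- Tail bound: for `Y ~ L_ℤ(b)` and all real `y`,
`Pr[Y ≥ y] = Pr[Y ≤ -y] ≤ e^{-⌈y⌉/b} / (1 + e^{-1/b})`. -/
theorem geometric_tail_bound (b : ℝ) (hb : 0 < b) (y : ℝ) :
    (∑' k : ℤ, if y ≤ (k : ℝ) then geomPDF b k else 0) =
      (∑' k : ℤ, if (k : ℝ) ≤ -y then geomPDF b k else 0) ∧
    (∑' k : ℤ, if y ≤ (k : ℝ) then geomPDF b k else 0) ≤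
      Real.exp (-(⌈y⌉ : ℝ) / b) / (1 + Real.exp (-1 / b)) := by
  constructor
  · -- symmetry
    rw [← (Equiv.neg ℤ).tsum_eq (fun k : ℤ => if (k : ℝ) ≤ -y then geomPDF b k else 0)]
    apply tsum_congr
    intro k
    simp only [Equiv.neg_apply, geomPDF_neg, Int.cast_neg, neg_le_neg_iff]
  · -- tail bound
    set c := (Real.exp (1 / b) - 1) / (Real.exp (1 / b) + 1) with hc
    set r := Real.exp (-1 / b) with hrdef
    have hr0 : (0 : ℝ) < r := Real.exp_pos _
    have hr1 : r < 1 := exp_neg_inv_lt_one b hb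
    have hkey : c * (1 - r)⁻¹ = (1 + r)⁻¹ := key_const b hb
    set n := ⌈y⌉ with hn
    have hcond : ∀ k : ℤ, (y ≤ (k : ℝ)) = (n ≤ k) := by
      intro k; rw [eq_iff_iff, hn]; exact (Int.ceil_le).symm
    simp only [hcond]
    by_cases hn0 : 0 ≤ n
    · rw [(upper_tail b hb n hn0).tsum_eq, mul_comm c _, mul_assoc, hkey]
      exact le_of_eq (div_eq_mul_inv _ _).symm
    · push_neg at hn0
      have hA := upper_tail b hb 0 le_rfl
      have hB := lower_tail b hb (-1) (by omega)
      have hC := lower_tail b hb (n - 1) (by omega)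
      have hsplit : (fun k : ℤ => if n ≤ k then geomPDF b k else 0)
          = fun k : ℤ => (if 0 ≤ k then geomPDF b k else 0) +
              ((if k ≤ -1 then geomPDF b k else 0) - (if k ≤ n - 1 then geomPDF b k else 0)) := by
        funext k
        by_cases h1 : 0 ≤ k
        · have h0 : n ≤ k := by omega
          have h2 : ¬ k ≤ -1 := by omega
          have h3 : ¬ k ≤ n - 1 := by omega
          simp [h0, h1, h2, h3]
        · by_cases h2 : n ≤ k
          · have h3 : k ≤ -1 := by omega
            have h4 : ¬ k ≤ n - 1 := by omega
            simp [h1, h2, h3, h4]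
          · have h3 : k ≤ -1 := by omega
            have h4 : k ≤ n - 1 := by omega
            simp [h1, h2, h3, h4]
      rw [hsplit, (hA.add (hB.sub hC)).tsum_eq]
      have hcc : ∀ x : ℝ, c * Real.exp x * (1 - r)⁻¹ = Real.exp x * (1 + r)⁻¹ := by
        intro x
        rw [mul_comm c _, mul_assoc, hkey]
      rw [hcc, hcc, hcc]
      rw [show (((0:ℤ)):ℝ) = (0:ℝ) by norm_num, show -(0:ℝ)/b = 0 by ring, Real.exp_zero]
      rw [show (((-1:ℤ)):ℝ) = (-1:ℝ) by norm_num]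
      set t := Real.exp (-(n : ℝ) / b) with htdef
      set s := Real.exp (((n - 1 : ℤ) : ℝ) / b) with hsdef
      have hst : s * t = r := by
        rw [hsdef, htdef, hrdef, ← Real.exp_add]
        congr 1
        push_cast
        ring
      have ht1 : 1 ≤ t := by
        rw [htdef]
        apply Real.one_le_exp
        have hnr : (n : ℝ) ≤ -1 := by exact_mod_cast (by omega : n ≤ -1)
        have h1 : (0:ℝ) ≤ -(n:ℝ) := by linarith
        positivity
      have hs0 : 0 < s := Real.exp_pos _
      have h1r : (0:ℝ) < 1 + r := by linarith
      have goal2 : 1 + r - s ≤ t := by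
        nlinarith [mul_nonneg (sub_nonneg.2 ht1) (sub_nonneg.2 (hr1.le.trans ht1)), hst, hs0.le]
      calc 1 * (1 + r)⁻¹ + (Real.exp (-1/b) * (1 + r)⁻¹ - s * (1 + r)⁻¹)
          = (1 + r - s) * (1 + r)⁻¹ := by rw [← hrdef]; ring
        _ ≤ t * (1 + r)⁻¹ := mul_le_mul_of_nonneg_right goal2 (by positivity)
        _ = t / (1 + r) := (div_eq_mul_inv _ _).symm
end

section
/- Calibrating geometric noise to an MOE target: the base geometric mechanism (adding noise from L_Z(1/ε)) run with ε = ln(20)/(⌊MOE⌋+1) for MOE > 0 has 95% margin of error at most MOE; that is, ⌊b·ln(40/(1+e^{1/b}))⌋ ≤ MOE with b = (⌊MOE⌋+1)/ln(20). -/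
open Real

/-- Calibrating geometric noise to a margin-of-error target: with scale
`b = (⌊MOE⌋+1)/ln 20` (i.e. `ε = ln 20 / (⌊MOE⌋+1)`), the 95% margin of error
`⌊b·ln(40/(1+e^{1/b}))⌋` of the base geometric mechanism is at most `MOE`. -/
theorem geometric_moe_calibration (MOE : ℝ) (hMOE : 0 < MOE) :
    ((⌊((⌊MOE⌋ : ℝ) + 1) / Real.log 20 *
        Real.log (40 / (1 + Real.exp (1 / (((⌊MOE⌋ : ℝ) + 1) / Real.log 20))))⌋ : ℝ))
      ≤ MOE := by
  set b : ℝ := ((⌊MOE⌋ : ℝ) + 1) / Real.log 20 with hb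
  have hlog20 : (0:ℝ) < Real.log 20 := Real.log_pos (by norm_num)
  have hfl : (0:ℝ) ≤ (⌊MOE⌋ : ℝ) := by
    exact_mod_cast Int.floor_nonneg.mpr hMOE.le
  have hbpos : 0 < b := div_pos (by linarith) hlog20
  have hexp : (1:ℝ) < Real.exp (1 / b) := by
    rw [Real.one_lt_exp_iff]
    positivity
  have h2 : (2:ℝ) < 1 + Real.exp (1 / b) := by linarith
  have hlt : Real.log (40 / (1 + Real.exp (1 / b))) < Real.log 20 := by
    have h20 : (40:ℝ) / (1 + Real.exp (1 / b)) < 20 := by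
      rw [div_lt_iff₀ (by linarith)]
      nlinarith
    exact (Real.log_lt_log_iff (by positivity) (by norm_num)).mpr h20
  have hx : b * Real.log (40 / (1 + Real.exp (1 / b))) < (⌊MOE⌋ : ℝ) + 1 := by
    have := mul_lt_mul_of_pos_left hlt hbpos
    rw [hb, div_mul_cancel₀ _ hlog20.ne'] at this
    exact this
  have hfloor : ⌊b * Real.log (40 / (1 + Real.exp (1 / b)))⌋ ≤ ⌊MOE⌋ := by
    have : ⌊b * Real.log (40 / (1 + Real.exp (1 / b)))⌋ < ⌊MOE⌋ + 1 := by
      rw [Int.floor_lt]; push_cast; exact hx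
    omega
  calc ((⌊b * Real.log (40 / (1 + Real.exp (1 / b)))⌋ : ℝ)) ≤ (⌊MOE⌋ : ℝ) := by
        exact_mod_cast hfloor
    _ ≤ MOE := Int.floor_le MOE
end

section
/- Discrete Gaussian tail dominated by continuous Gaussian: for all integers m ≥ 1 and all σ > 0, Pr[X ≥ m] for X drawn from the discrete Gaussian N_Z(σ²) is at most Pr[X ≥ m−1] for X drawn from the continuous Gaussian N(0,σ²). -/
open Real

/-- Unnormalized discrete Gaussian weight. -/
noncomputable def dgWeight (σ : ℝ) (k : ℤ) : ℝ := Real.exp (-(k : ℝ) ^ 2 / (2 * σ ^ 2))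

/-- Mass function of the discrete Gaussian `N_ℤ(σ²)`. -/
noncomputable def discreteGaussianPDF (σ : ℝ) (k : ℤ) : ℝ :=
  dgWeight σ k / ∑' j : ℤ, dgWeight σ j

/-- Density of the continuous Gaussian `N(0, σ²)`. -/
noncomputable def gaussPDF (σ : ℝ) (x : ℝ) : ℝ :=
  Real.exp (-x ^ 2 / (2 * σ ^ 2)) / Real.sqrt (2 * Real.pi * σ ^ 2)

open MeasureTheory


lemma summable_exp_neg_int_sq {c : ℝ} (hc : 0 < c) :
    Summable fun n : ℤ => Real.exp (-c * (n : ℝ) ^ 2) := by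
  have hgeom : Summable fun n : ℕ => Real.exp (-c) ^ n :=
    summable_geometric_of_lt_one (Real.exp_pos _).le
      (Real.exp_lt_one_iff.2 (by linarith))
  have hle : ∀ n : ℕ, Real.exp (-c * (n : ℝ) ^ 2) ≤ Real.exp (-c) ^ n := by
    intro n
    rw [← Real.exp_nat_mul]
    apply Real.exp_le_exp.2
    have : (n : ℝ) ≤ (n : ℝ) ^ 2 := by
      rcases Nat.eq_zero_or_pos n with h | h
      · simp [h]
      · have h1 : (1:ℝ) ≤ n := by exact_mod_cast h
        nlinarith
    nlinarith
  have hnat : Summable fun n : ℕ => Real.exp (-c * (n : ℝ) ^ 2) :=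
    Summable.of_nonneg_of_le (fun n => (Real.exp_pos _).le) hle hgeom
  refine (summable_int_iff_summable_nat_and_neg).2 ⟨?_, ?_⟩ <;> simpa using hnat



lemma gauss_integrable {σ : ℝ} (hσ : 0 < σ) :
    MeasureTheory.Integrable (fun x : ℝ => Real.exp (-x ^ 2 / (2 * σ ^ 2))) := by
  have hb : 0 < (2 * σ ^ 2)⁻¹ := by positivity
  have heq : (fun x : ℝ => Real.exp (-(2 * σ ^ 2)⁻¹ * x ^ 2))
      = fun x : ℝ => Real.exp (-x ^ 2 / (2 * σ ^ 2)) := funext fun x => by congr 1; ring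
  rw [← heq]
  exact integrable_exp_neg_mul_sq hb

lemma gauss_antitoneOn {σ : ℝ} (hσ : 0 < σ) {x y : ℝ} (hx : 0 ≤ x) (hxy : x ≤ y) :
    Real.exp (-y ^ 2 / (2 * σ ^ 2)) ≤ Real.exp (-x ^ 2 / (2 * σ ^ 2)) := by
  apply Real.exp_le_exp.2
  have h2 : x ^ 2 ≤ y ^ 2 := by nlinarith
  have hd : (0:ℝ) < 2 * σ ^ 2 := by positivity
  rw [div_le_div_iff_of_pos_right hd]
  linarith

lemma tail_sum_le_integral {σ : ℝ} (hσ : 0 < σ) (m : ℤ) (hm : 1 ≤ m) :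
    (∑' k : ℤ, if m ≤ k then dgWeight σ k else 0) ≤
      ∫ x in Set.Ici ((m : ℝ) - 1), Real.exp (-x ^ 2 / (2 * σ ^ 2)) := by
  set f : ℝ → ℝ := fun x => Real.exp (-x ^ 2 / (2 * σ ^ 2)) with hf_def
  set c : ℝ := (m : ℝ) - 1 with hc_def
  have hm1 : (1 : ℝ) ≤ (m : ℝ) := by exact_mod_cast hm
  have hc0 : 0 ≤ c := by simp [hc_def]; linarith
  have hf_cont : Continuous f := by fun_prop
  have hf_int : MeasureTheory.Integrable f := gauss_integrable hσ
  -- the equiv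
  let e : ℕ ≃ {k : ℤ // m ≤ k} :=
    { toFun := fun n => ⟨m + n, le_add_of_nonneg_right (Int.ofNat_nonneg n)⟩
      invFun := fun k => (k.1 - m).toNat
      left_inv := fun n => by simp
      right_inv := fun k => by
        ext
        simp [Int.toNat_of_nonneg (sub_nonneg.2 k.2)] }
  have hA : (∑' k : ℤ, if m ≤ k then dgWeight σ k else 0)
      = ∑' n : ℕ, dgWeight σ (m + n) := by
    calc (∑' k : ℤ, if m ≤ k then dgWeight σ k else 0)
        = ∑' k : ℤ, Set.indicator {k : ℤ | m ≤ k} (dgWeight σ) k :=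
          tsum_congr fun k => by simp [Set.indicator_apply]
      _ = ∑' k : {k : ℤ | m ≤ k}, dgWeight σ k := (tsum_subtype _ _).symm
      _ = ∑' n : ℕ, dgWeight σ (m + n) := (Equiv.tsum_eq e fun k => dgWeight σ k.1).symm
  -- sets
  set s : ℕ → Set ℝ := fun n => Set.Ioc (c + n) (c + n + 1) with hs_def
  have hmeas : ∀ n, MeasurableSet (s n) := fun n => measurableSet_Ioc
  have hdisj : Pairwise (Function.onFun Disjoint s) := by
    have key : ∀ i j : ℕ, i < j → Disjoint (s i) (s j) := by
      intro i j hij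
      rw [hs_def, Set.Ioc_disjoint_Ioc]
      have : (i : ℝ) + 1 ≤ (j : ℝ) := by exact_mod_cast hij
      exact le_sup_of_le_right (le_trans inf_le_left (by linarith))
    intro i j hij
    rcases hij.lt_or_gt with h | h
    · exact key i j h
    · exact (key j i h).symm
  have hUnion : Set.Ioi c = ⋃ n : ℕ, s n := by
    ext x
    simp only [Set.mem_Ioi, Set.mem_iUnion, hs_def, Set.mem_Ioc]
    constructor
    · intro hx
      set t : ℝ := x - c with ht_def
      have ht : 0 < t := by simp [ht_def]; linarith
      have h1 : 1 ≤ ⌈t⌉₊ := Nat.one_le_iff_ne_zero.2 (Nat.ceil_pos.2 ht).ne'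
      refine ⟨⌈t⌉₊ - 1, ?_, ?_⟩
      · have hcast : ((⌈t⌉₊ - 1 : ℕ) : ℝ) = (⌈t⌉₊ : ℝ) - 1 := by
          push_cast [Nat.cast_sub h1]; ring
        have := Nat.ceil_lt_add_one ht.le
        rw [hcast]; simp [ht_def] at this ⊢; linarith
      · have hcast : ((⌈t⌉₊ - 1 : ℕ) : ℝ) = (⌈t⌉₊ : ℝ) - 1 := by
          push_cast [Nat.cast_sub h1]; ring
        have := Nat.le_ceil t
        rw [hcast]; simp [ht_def] at this ⊢; linarith
    · rintro ⟨n, hn1, hn2⟩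
      have : (0:ℝ) ≤ n := n.cast_nonneg
      linarith
  have hintOn : MeasureTheory.IntegrableOn f (⋃ n, s n) := hf_int.integrableOn
  have hhs := MeasureTheory.hasSum_integral_iUnion hmeas hdisj hintOn
  have hD : (∫ x in Set.Ici c, f x) = ∑' n : ℕ, ∫ x in s n, f x := by
    rw [MeasureTheory.integral_Ici_eq_integral_Ioi, hUnion]
    exact MeasureTheory.integral_iUnion hmeas hdisj hintOn
  -- termwise bound
  have hterm : ∀ n : ℕ, dgWeight σ (m + n) ≤ ∫ x in s n, f x := by
    intro n
    have hab : c + n ≤ c + n + 1 := by linarith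
    have ha0 : 0 ≤ c + n := by positivity
    have h1 : (∫ x in s n, f x) = ∫ x in (c + n)..(c + n + 1), f x := by
      rw [hs_def, intervalIntegral.integral_of_le hab]
    have h2 : (∫ x in (c + n)..(c + n + 1), (fun _ => f (c + n + 1)) x)
        ≤ ∫ x in (c + n)..(c + n + 1), f x := by
      apply intervalIntegral.integral_mono_on hab
        (intervalIntegrable_const) (hf_cont.intervalIntegrable _ _)
      intro x hx
      exact gauss_antitoneOn hσ (le_trans ha0 hx.1) hx.2
    rw [intervalIntegral.integral_const] at h2
    have hval : dgWeight σ (m + n) = f (c + n + 1) := by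
      rw [hf_def, dgWeight, hc_def]
      push_cast
      ring_nf
    rw [h1, hval]
    simpa using h2
  -- summability
  have hc2 : 0 < (2 * σ ^ 2)⁻¹ := by positivity
  have hsumZ : Summable fun k : ℤ => dgWeight σ k := by
    have := summable_exp_neg_int_sq hc2
    refine this.congr fun k => ?_
    rw [dgWeight]
    congr 1
    ring
  have hsumL : Summable fun n : ℕ => dgWeight σ (m + n) := by
    have hinj : Function.Injective fun n : ℕ => m + (n : ℤ) := by
      intro a b h
      simpa using h
    exact hsumZ.comp_injective hinj
  have hsumR : Summable fun n : ℕ => ∫ x in s n, f x := hhs.summable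
  rw [hA, hD]
  exact Summable.tsum_le_tsum hterm hsumL hsumR


lemma sqrt_le_theta {σ : ℝ} (hσ : 0 < σ) :
    Real.sqrt (2 * π * σ ^ 2) ≤ ∑' j : ℤ, dgWeight σ j := by
  set a : ℝ := (2 * π * σ ^ 2)⁻¹ with ha_def
  have hπ := Real.pi_pos
  have ha : 0 < a := by positivity
  have key := Real.tsum_exp_neg_mul_int_sq ha
  have h1 : ∀ n : ℤ, -π * a * (n : ℝ) ^ 2 = -(n : ℝ) ^ 2 / (2 * σ ^ 2) := by
    intro n
    rw [ha_def]
    field_simp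
  have hS : (∑' j : ℤ, dgWeight σ j) = ∑' n : ℤ, Real.exp (-π * a * (n : ℝ) ^ 2) := by
    unfold dgWeight
    exact tsum_congr fun n => by rw [h1]
  have hpa : 0 < π / a := by positivity
  have hsum2 := summable_exp_neg_int_sq hpa
  have hsum2' : Summable fun n : ℤ => Real.exp (-π / a * (n : ℝ) ^ 2) := by
    simpa only [neg_div] using hsum2
  have h2 : (1 : ℝ) ≤ ∑' n : ℤ, Real.exp (-π / a * (n : ℝ) ^ 2) := by
    have := Summable.le_tsum hsum2' 0 (fun j _ => (Real.exp_pos _).le)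
    simpa using this
  have h3 : (1 : ℝ) / a ^ (1 / 2 : ℝ) = Real.sqrt (2 * π * σ ^ 2) := by
    rw [ha_def, Real.inv_rpow (by positivity), one_div, inv_inv, Real.sqrt_eq_rpow]
  rw [hS, key, h3]
  nlinarith [Real.sqrt_nonneg (2 * π * σ ^ 2)]


/-- Discrete Gaussian tail dominated by continuous Gaussian: for integers
`m ≥ 1`, `Pr_{N_ℤ(σ²)}[X ≥ m] ≤ Pr_{N(0,σ²)}[X ≥ m - 1]`. -/
theorem discrete_gaussian_tail_le_continuous (σ : ℝ) (hσ : 0 < σ)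
    (m : ℤ) (hm : 1 ≤ m) :
    (∑' k : ℤ, if m ≤ k then discreteGaussianPDF σ k else 0) ≤
      ∫ x in Set.Ici ((m : ℝ) - 1), gaussPDF σ x := by
  set S : ℝ := ∑' j : ℤ, dgWeight σ j with hS_def
  have hπ := Real.pi_pos
  have hsqrt_pos : 0 < Real.sqrt (2 * π * σ ^ 2) := Real.sqrt_pos.2 (by positivity)
  have hS_ge : Real.sqrt (2 * π * σ ^ 2) ≤ S := sqrt_le_theta hσ
  have hLHS : (∑' k : ℤ, if m ≤ k then discreteGaussianPDF σ k else 0)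
      = (∑' k : ℤ, if m ≤ k then dgWeight σ k else 0) / S := by
    rw [← tsum_div_const]
    refine tsum_congr fun k => ?_
    by_cases h : m ≤ k <;> simp [h, discreteGaussianPDF, hS_def]
  have hRHS : (∫ x in Set.Ici ((m : ℝ) - 1), gaussPDF σ x)
      = (∫ x in Set.Ici ((m : ℝ) - 1), Real.exp (-x ^ 2 / (2 * σ ^ 2)))
        / Real.sqrt (2 * π * σ ^ 2) := by
    rw [← MeasureTheory.integral_div]
    rfl
  rw [hLHS, hRHS]
  have hT0 : 0 ≤ ∑' k : ℤ, if m ≤ k then dgWeight σ k else 0 :=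
    tsum_nonneg fun k => by by_cases h : m ≤ k <;> simp [h, dgWeight, (Real.exp_pos _).le]
  have hI0 : 0 ≤ ∫ x in Set.Ici ((m : ℝ) - 1), Real.exp (-x ^ 2 / (2 * σ ^ 2)) :=
    MeasureTheory.setIntegral_nonneg measurableSet_Ici fun x _ => (Real.exp_pos _).le
  exact div_le_div₀ hI0 (tail_sum_le_integral hσ m hm) hsqrt_pos hS_ge
end
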